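/- Soundness of universal reduction: let Π.ψ be a PCNF, C ∪ {l} a non-tautological clause of ψ where l is universal in Π and every existential literal l' of C satisfies l' <_Π l (l' is quantified in an earlier block than l). Then Π.ψ is satisfiable if and only if Π.ψ' is satisfiable, where ψ' is ψ with the clause C ∪ {l} replaced by C. -/

import Mathlib

/-!
Deleting a literal only strengthens a clause, and satisfiability is monotone under subsumption,
so the reduced formula implies the original one. Conversely, a satisfiable formula stays
satisfiable when `C` is added, by induction on the prefix: assigning a variable other than `l`'s
either satisfies `C` or restricts `C ∪ {l}` to a clause of the same shape. When `l`'s variable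
is reached it is universal, and in the branch falsifying `l` the clause `C ∪ {l}` becomes a
non-tautological clause over universal variables only, which the universal player falsifies
literal by literal; so in that case the formula was unsatisfiable to begin with.
-/

/-- Variables are natural numbers. -/
abbrev Var := ℕ

/-- A literal is a variable together with a polarity. -/
abbrev Lit := Var × Bool

/-- Negation of a literal. -/
def Lit.negate (l : Lit) : Lit := (l.1, !l.2)

/-- A clause is a finite set of literals (interpreted disjunctively). -/
abbrev Clause := Finset Lit

/-- A cube is a finite set of literals (interpreted conjunctively). -/
abbrev Cube := Finset Lit

/-- A CNF is a finite set of clauses. -/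
abbrev Cnf := Finset Clause

/-- An assignment is a finite set of literals. -/
abbrev Assignment := Finset Lit

/-- An assignment contains no complementary pair of literals. -/
def Assignment.consistent (A : Assignment) : Prop := ∀ l ∈ A, Lit.negate l ∉ A

/-- A total assignment satisfies a literal. -/
def litSat (σ : Var → Bool) (l : Lit) : Prop := σ l.1 = l.2

/-- A total assignment satisfies a clause. -/
def clauseSat (σ : Var → Bool) (C : Clause) : Prop := ∃ l ∈ C, litSat σ l

/-- A total assignment satisfies a CNF (is a propositional model). -/
def cnfSat (σ : Var → Bool) (ψ : Cnf) : Prop := ∀ C ∈ ψ, clauseSat σ C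

/-- A total assignment satisfies a cube. -/
def cubeSat (σ : Var → Bool) (D : Cube) : Prop := ∀ l ∈ D, litSat σ l

/-- Restriction of a clause by an assignment: delete falsified literals. -/
def Clause.restrict (C : Clause) (A : Assignment) : Clause :=
  C.filter (fun l => Lit.negate l ∉ A)

/-- Restriction ψ[A] of a CNF by an assignment: remove satisfied clauses and
delete falsified literals from the remaining clauses. -/
def Cnf.restrict (ψ : Cnf) (A : Assignment) : Cnf :=
  (ψ.filter (fun C => ∀ l ∈ A, l ∉ C)).image (fun C => Clause.restrict C A)

/-- Quantifiers. -/
inductive Quant | ex | all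
deriving DecidableEq

/-- A quantifier prefix: a list of quantified variables (outermost first). -/
abbrev QPrefix := List (Quant × Var)

/-- Restriction of a prefix by an assignment: remove assigned variables. -/
def QPrefix.restrict (pre : QPrefix) (A : Assignment) : QPrefix :=
  pre.filter (fun q => q.2 ∉ A.image Prod.fst)

/-- Satisfiability of the PCNF `pre.ψ`, defined recursively over the prefix:
an existential variable needs one satisfiable branch, a universal variable
both; a quantifier-free CNF is satisfiable iff it is propositionally true. -/
def qbfSat : QPrefix → Cnf → Prop
  | [], ψ => ∃ σ : Var → Bool, cnfSat σ ψ
  | (Quant.ex, x) :: pre, ψ =>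
      qbfSat pre (Cnf.restrict ψ {(x, true)}) ∨ qbfSat pre (Cnf.restrict ψ {(x, false)})
  | (Quant.all, x) :: pre, ψ =>
      qbfSat pre (Cnf.restrict ψ {(x, true)}) ∧ qbfSat pre (Cnf.restrict ψ {(x, false)})

/-- `x` is quantified before (outer to) `y` in the prefix. -/
def before (pre : QPrefix) (x y : Var) : Prop :=
  ∃ i j : Fin pre.length, (i : ℕ) < (j : ℕ) ∧ (pre.get i).2 = x ∧ (pre.get j).2 = y

-- A clause is non-tautological iff it is consistent as a set of literals.
namespace Assignment

theorem consistent.mono {A B : Assignment} (hB : B.consistent) (hAB : A ⊆ B) :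
    A.consistent :=
  fun m hm hneg => hB m (hAB hm) (hAB hneg)

theorem consistent.exists_not_mem {A : Assignment} (hA : A.consistent) (x : Var) :
    ∃ b, (x, b) ∉ A := by
  by_cases htrue : (x, true) ∈ A
  · exact ⟨false, hA _ htrue⟩
  · exact ⟨true, htrue⟩

end Assignment

namespace Clause

theorem restrict_subset (C : Clause) (A : Assignment) : C.restrict A ⊆ C :=
  Finset.filter_subset _ _

theorem var_ne_of_mem_restrict {C : Clause} {x : Var} {b : Bool} {m : Lit}
    (hxb : (x, b) ∉ C) (hm : m ∈ C.restrict {(x, b)}) : m.1 ≠ x := by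
  obtain ⟨hmC, hneg⟩ := Finset.mem_filter.1 hm
  intro hmx
  obtain ⟨y, c⟩ := m
  subst hmx
  cases c <;> cases b <;> simp_all [Lit.negate]

theorem restrict_insert_of_var_ne {C : Clause} {l : Lit} {x : Var} {b : Bool} (hx : l.1 ≠ x) :
    (insert l C).restrict {(x, b)} = insert l (C.restrict {(x, b)}) := by
  refine (Finset.filter_insert _ _ _).trans (if_pos ?_)
  rw [Finset.mem_singleton]
  exact fun h => hx (congrArg Prod.fst h)

end Clause

namespace Cnf

theorem restrict_mem_restrict {ψ : Cnf} {C : Clause} {A : Assignment} (hC : C ∈ ψ)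
    (hA : ∀ a ∈ A, a ∉ C) : C.restrict A ∈ ψ.restrict A :=
  Finset.mem_image_of_mem _ (Finset.mem_filter.2 ⟨hC, hA⟩)

theorem restrict_insert_of_mem {ψ : Cnf} {C : Clause} {a : Lit} (ha : a ∈ C) :
    (insert C ψ).restrict {a} = ψ.restrict {a} := by
  unfold Cnf.restrict
  rw [Finset.filter_insert, if_neg (by simpa using ha)]

theorem restrict_insert_of_not_mem {ψ : Cnf} {C : Clause} {a : Lit} (ha : a ∉ C) :
    (insert C ψ).restrict {a} = insert (C.restrict {a}) (ψ.restrict {a}) := by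
  unfold Cnf.restrict
  rw [Finset.filter_insert, if_pos (by simpa using ha), Finset.image_insert]

def Subsumes (φ ψ : Cnf) : Prop := ∀ D ∈ ψ, ∃ E ∈ φ, E ⊆ D

theorem subsumes_of_superset {φ ψ : Cnf} (h : ψ ⊆ φ) : φ.Subsumes ψ :=
  fun D hD => ⟨D, h hD, subset_rfl⟩

theorem Subsumes.restrict {φ ψ : Cnf} (h : φ.Subsumes ψ) (A : Assignment) :
    (φ.restrict A).Subsumes (ψ.restrict A) := by
  intro D hD
  obtain ⟨D₀, hD₀, rfl⟩ := Finset.mem_image.1 hD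
  obtain ⟨hD₀ψ, hD₀A⟩ := Finset.mem_filter.1 hD₀
  obtain ⟨E, hE, hED₀⟩ := h D₀ hD₀ψ
  exact ⟨E.restrict A, restrict_mem_restrict hE fun a ha haE => hD₀A a ha (hED₀ haE),
    Finset.filter_subset_filter _ hED₀⟩

theorem subsumes_insert_erase {ψ : Cnf} {C D : Clause} (hCD : C ⊆ D) :
    Cnf.Subsumes (insert C (ψ.erase D)) ψ := by
  intro E hE
  by_cases hED : E = D
  · exact ⟨C, Finset.mem_insert_self _ _, hED ▸ hCD⟩
  · exact ⟨E, Finset.mem_insert_of_mem (Finset.mem_erase.2 ⟨hED, hE⟩), subset_rfl⟩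

end Cnf

theorem quant_eq_of_mem_cons {q q' : Quant} {x : Var} {pre : QPrefix}
    (hnodup : (((q, x) :: pre).map Prod.snd).Nodup) (h : (q', x) ∈ (q, x) :: pre) : q' = q := by
  rcases List.mem_cons.1 h with h | h
  · exact congrArg Prod.fst h
  · exact absurd (List.mem_map_of_mem (f := Prod.snd) h) (List.nodup_cons.1 hnodup).1

theorem mem_of_mem_cons_of_ne {q q' : Quant} {x y : Var} {pre : QPrefix}
    (h : (q', y) ∈ (q, x) :: pre) (hy : y ≠ x) : (q', y) ∈ pre :=
  (List.mem_cons.1 h).resolve_left fun h => hy (congrArg Prod.snd h)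

theorem before_cons_of_ne {q : Quant} {x a b : Var} {pre : QPrefix} (ha : a ≠ x)
    (h : before ((q, x) :: pre) a b) : before pre a b := by
  obtain ⟨⟨_ | i, hi⟩, ⟨_ | j, hj⟩, hij, hia, hjb⟩ := h
  · exact absurd hij (by simp)
  · exact (ha hia.symm).elim
  · exact absurd hij (by simp)
  · exact ⟨⟨i, by simpa using hi⟩, ⟨j, by simpa using hj⟩, by simpa using hij, hia,
      hjb⟩

theorem mem_map_snd_of_before_cons {q : Quant} {x a b : Var} {pre : QPrefix}
    (h : before ((q, x) :: pre) a b) : b ∈ pre.map Prod.snd := by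
  obtain ⟨⟨i, hi⟩, ⟨_ | j, hj⟩, hij, -, hjb⟩ := h
  · exact absurd hij (by simp)
  · exact List.mem_map.2 ⟨_, List.get_mem pre ⟨j, by simpa using hj⟩, hjb⟩

theorem qbfSat_cons_imp {q : Quant} {x : Var} {pre : QPrefix} {φ ψ : Cnf}
    (h : ∀ b, qbfSat pre (φ.restrict {(x, b)}) → qbfSat pre (ψ.restrict {(x, b)})) :
    qbfSat ((q, x) :: pre) φ → qbfSat ((q, x) :: pre) ψ := by
  cases q
  · exact Or.imp (h true) (h false)
  · exact And.imp (h true) (h false)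

theorem qbfSat_mono {pre : QPrefix} {φ ψ : Cnf} (h : φ.Subsumes ψ) :
    qbfSat pre φ → qbfSat pre ψ := by
  induction pre generalizing φ ψ with
  | nil =>
    rintro ⟨σ, hσ⟩
    refine ⟨σ, fun D hD => ?_⟩
    obtain ⟨E, hE, hED⟩ := h D hD
    obtain ⟨m, hm, hσm⟩ := hσ E hE
    exact ⟨m, hED hm, hσm⟩
  | cons qx pre ih => exact qbfSat_cons_imp fun b => ih (h.restrict _)

theorem qbfSat_cons_exists {q : Quant} {x : Var} {pre : QPrefix} {ψ : Cnf}
    (h : qbfSat ((q, x) :: pre) ψ) : ∃ b, qbfSat pre (ψ.restrict {(x, b)}) := by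
  cases q
  · exact h.elim (⟨true, ·⟩) (⟨false, ·⟩)
  · exact ⟨true, h.1⟩

theorem qbfSat_all_cons {x : Var} {pre : QPrefix} {ψ : Cnf}
    (h : qbfSat ((Quant.all, x) :: pre) ψ) (b : Bool) : qbfSat pre (ψ.restrict {(x, b)}) := by
  cases b
  · exact h.2
  · exact h.1

theorem not_qbfSat_of_universal_clause {pre : QPrefix} (hnodup : (pre.map Prod.snd).Nodup)
    {ψ : Cnf} {C : Clause} (hC : C ∈ ψ) (hcons : Assignment.consistent C)
    (huniv : ∀ m ∈ C, (Quant.all, m.1) ∈ pre) : ¬ qbfSat pre ψ := by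
  induction pre generalizing ψ C with
  | nil =>
    rintro ⟨σ, hσ⟩
    obtain ⟨m, hm, -⟩ := hσ C hC
    exact List.not_mem_nil (huniv m hm)
  | cons qx pre ih =>
    obtain ⟨q, x⟩ := qx
    intro hsat
    obtain ⟨b, hxb, hb⟩ : ∃ b, (x, b) ∉ C ∧ qbfSat pre (ψ.restrict {(x, b)}) := by
      cases q
      · have hx : ∀ b, (x, b) ∉ C := fun b hxb =>
          Quant.noConfusion (quant_eq_of_mem_cons hnodup (huniv _ hxb))
        obtain ⟨b, hb⟩ := qbfSat_cons_exists hsat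
        exact ⟨b, hx b, hb⟩
      · obtain ⟨b, hxb⟩ := hcons.exists_not_mem x
        exact ⟨b, hxb, qbfSat_all_cons hsat b⟩
    exact ih (List.nodup_cons.1 hnodup).2
      (Cnf.restrict_mem_restrict hC (by simpa using hxb)) (hcons.mono (C.restrict_subset _))
      (fun m hm => mem_of_mem_cons_of_ne (huniv m (C.restrict_subset _ hm))
        (Clause.var_ne_of_mem_restrict hxb hm)) hb

/-- `l` may be deleted from the clause `insert l C` by universal reduction under `pre`. -/
def UniversallyReducible (pre : QPrefix) (C : Clause) (l : Lit) : Prop :=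
  (Quant.all, l.1) ∈ pre ∧
    ∀ m ∈ C, (∃ q, (q, m.1) ∈ pre) ∧ ((Quant.ex, m.1) ∈ pre → before pre m.1 l.1)

namespace UniversallyReducible

theorem of_cons {q : Quant} {x : Var} {pre : QPrefix} {C C' : Clause} {l : Lit}
    (h : UniversallyReducible ((q, x) :: pre) C l) (hl : l.1 ≠ x) (hC' : C' ⊆ C)
    (hx : ∀ m ∈ C', m.1 ≠ x) : UniversallyReducible pre C' l := by
  refine ⟨mem_of_mem_cons_of_ne h.1 hl, fun m hm => ?_⟩
  obtain ⟨⟨q', hq'⟩, hbefore⟩ := h.2 m (hC' hm)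
  exact ⟨⟨q', mem_of_mem_cons_of_ne hq' (hx m hm)⟩,
    fun hex => before_cons_of_ne (hx m hm) (hbefore (List.mem_cons_of_mem _ hex))⟩

theorem universal_of_head {q : Quant} {pre : QPrefix} {C : Clause} {l : Lit}
    (hnodup : (((q, l.1) :: pre).map Prod.snd).Nodup)
    (h : UniversallyReducible ((q, l.1) :: pre) C l) {m : Lit} (hm : m ∈ C) (hml : m.1 ≠ l.1) :
    (Quant.all, m.1) ∈ pre := by
  obtain ⟨⟨q', hq'⟩, hbefore⟩ := h.2 m hm
  have hmem := mem_of_mem_cons_of_ne hq' hml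
  cases q'
  · exact absurd (mem_map_snd_of_before_cons (hbefore (List.mem_cons_of_mem _ hmem)))
      (List.nodup_cons.1 hnodup).1
  · exact hmem

/-- The branch falsifying `l` restricts `insert l C` to a clause that is purely universal,
since existential variables of `C` would have to precede `l`. -/
theorem not_qbfSat_cons {q : Quant} {pre : QPrefix} {ψ : Cnf} {C : Clause} {l : Lit}
    (hnodup : (((q, l.1) :: pre).map Prod.snd).Nodup) (hmem : insert l C ∈ ψ)
    (hcons : Assignment.consistent (insert l C))
    (hred : UniversallyReducible ((q, l.1) :: pre) C l) :
    ¬ qbfSat ((q, l.1) :: pre) ψ := by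
  obtain rfl : Quant.all = q := quant_eq_of_mem_cons hnodup hred.1
  intro hsat
  have hnl : l.negate ∉ insert l C := hcons l (Finset.mem_insert_self _ _)
  set E := (insert l C).restrict {l.negate}
  have hE_var : ∀ m ∈ E, m.1 ≠ l.1 := fun m hm => Clause.var_ne_of_mem_restrict hnl hm
  have hEC : E ⊆ C := fun m hm =>
    (Finset.mem_insert.1 (Clause.restrict_subset _ _ hm)).resolve_left
      fun h => hE_var m hm (congrArg Prod.fst h)
  exact not_qbfSat_of_universal_clause (List.nodup_cons.1 hnodup).2
    (Cnf.restrict_mem_restrict hmem (by simpa using hnl))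
    (hcons.mono (Clause.restrict_subset _ _))
    (fun m hm => hred.universal_of_head hnodup (hEC hm) (hE_var m hm))
    (qbfSat_all_cons hsat (!l.2))

end UniversallyReducible

theorem qbfSat_insert_of_universallyReducible {pre : QPrefix}
    (hnodup : (pre.map Prod.snd).Nodup) {ψ : Cnf} {C : Clause} {l : Lit}
    (hmem : insert l C ∈ ψ) (hcons : Assignment.consistent (insert l C))
    (hred : UniversallyReducible pre C l) : qbfSat pre ψ → qbfSat pre (insert C ψ) := by
  induction pre generalizing ψ C with
  | nil => exact absurd hred.1 List.not_mem_nil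
  | cons qx pre ih =>
    obtain ⟨q, x⟩ := qx
    have hnodup' := (List.nodup_cons.1 hnodup).2
    by_cases hx : l.1 = x
    · subst hx
      exact fun hsat => (hred.not_qbfSat_cons hnodup hmem hcons hsat).elim
    · refine qbfSat_cons_imp fun b hb => ?_
      by_cases hxb : (x, b) ∈ C
      · rwa [Cnf.restrict_insert_of_mem hxb]
      rw [Cnf.restrict_insert_of_not_mem hxb]
      have hxbD : (x, b) ∉ insert l C := by
        rw [Finset.mem_insert, not_or]
        exact ⟨fun h => hx (congrArg Prod.fst h).symm, hxb⟩
      refine ih hnodup' ?_ ?_ (hred.of_cons hx (Clause.restrict_subset _ _)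
        fun m hm => Clause.var_ne_of_mem_restrict hxb hm) hb
      · rw [← Clause.restrict_insert_of_var_ne hx]
        exact Cnf.restrict_mem_restrict hmem (by simpa using hxbD)
      · rw [← Clause.restrict_insert_of_var_ne hx]
        exact hcons.mono (Clause.restrict_subset _ _)

theorem universal_reduction_sound_general
    (pre : QPrefix) (ψ : Cnf) (C : Clause) (l : Lit)
    (hnodup : (pre.map Prod.snd).Nodup)
    (hmem : insert l C ∈ ψ)
    (hnontaut : ∀ m ∈ insert l C, Lit.negate m ∉ insert l C)
    (huniv : (Quant.all, l.1) ∈ pre)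
    (hvars : ∀ m ∈ C, ∃ q, (q, m.1) ∈ pre)
    (horder : ∀ m ∈ C, (Quant.ex, m.1) ∈ pre → before pre m.1 l.1) :
    qbfSat pre ψ ↔ qbfSat pre (insert C (ψ.erase (insert l C))) := by
  have hred : UniversallyReducible pre C l := ⟨huniv, fun m hm => ⟨hvars m hm, horder m hm⟩⟩
  have hsub : insert C (ψ.erase (insert l C)) ⊆ insert C ψ :=
    Finset.insert_subset_insert _ (Finset.erase_subset _ _)
  constructor
  · intro h
    exact qbfSat_mono (Cnf.subsumes_of_superset hsub)
      (qbfSat_insert_of_universallyReducible hnodup hmem hnontaut hred h)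
  · exact qbfSat_mono (Cnf.subsumes_insert_erase (Finset.subset_insert _ _))

/-- Soundness of universal reduction: a universal literal `l` of a
non-tautological clause `C ∪ {l}` that is quantified after all existential
literals of `C` may be deleted, preserving QBF satisfiability. -/
theorem universal_reduction_sound
    (pre : QPrefix) (ψ : Cnf) (C : Clause) (l : Lit)
    (hnodup : (pre.map Prod.snd).Nodup)
    (hmem : insert l C ∈ ψ)
    (hl : l ∉ C)
    (hnontaut : ∀ m ∈ insert l C, Lit.negate m ∉ insert l C)
    (huniv : (Quant.all, l.1) ∈ pre)
    (hvars : ∀ m ∈ C, ∃ q, (q, m.1) ∈ pre)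
    (horder : ∀ m ∈ C, (Quant.ex, m.1) ∈ pre → before pre m.1 l.1) :
    qbfSat pre ψ ↔ qbfSat pre (insert C (ψ.erase (insert l C))) :=
  universal_reduction_sound_general pre ψ C l hnodup hmem hnontaut huniv hvars horder
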